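/- arXiv:1911.01515 — 6 statements merged into one kernel-verified Lean document; each statement's English description precedes it below -/
import Mathlib

section
/- For every N-periodic billiard orbit P in the ellipse E, the Joachimsthal quantity is invariant along the orbit: the number (1/2)·(u_{i−1} · ∇f(P i)) is the same for all indices i ∈ ZMod N (here u_{i−1} is the unit incoming direction at the bounce point P i). -/
open scoped RealInnerProductSpace

noncomputable section

abbrev Pt : Type := EuclideanSpace ℝ (Fin 2)

/-- f(x,y) = x²/a² + y²/b² -/
def fE (a b : ℝ) (p : Pt) : ℝ := (p 0) ^ 2 / a ^ 2 + (p 1) ^ 2 / b ^ 2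

/-- ∇f(x,y) = (2x/a², 2y/b²) -/
def gradE (a b : ℝ) (p : Pt) : Pt :=
  (WithLp.equiv 2 (Fin 2 → ℝ)).symm ![2 * p 0 / a ^ 2, 2 * p 1 / b ^ 2]

/-- unit vector from `p` to `q` -/
def uvec (p q : Pt) : Pt := ‖q - p‖⁻¹ • (q - p)

/-- An N-periodic billiard orbit in the ellipse with semiaxes a, b:
vertices on the ellipse, consecutive vertices distinct, and the elastic
reflection law `u_i = u_{i-1} - 2 (u_{i-1}·n_i) n_i` at each bounce. -/
def IsOrbit (a b : ℝ) {N : ℕ} (P : ZMod N → Pt) : Prop :=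
  (∀ i, fE a b (P i) = 1) ∧ (∀ i, P (i + 1) ≠ P i) ∧
  ∀ i : ZMod N,
    uvec (P i) (P (i + 1)) =
      uvec (P (i - 1)) (P i) -
        (2 * ⟪uvec (P (i - 1)) (P i), ‖gradE a b (P i)‖⁻¹ • gradE a b (P i)⟫) •
          (‖gradE a b (P i)‖⁻¹ • gradE a b (P i))

/-- Joachimsthal quantity (1/2)·(u_{i−1} · ∇f(P i)) at bounce i. -/
def joach (a b : ℝ) {N : ℕ} (P : ZMod N → Pt) (i : ZMod N) : ℝ :=
  (1 / 2) * ⟪uvec (P (i - 1)) (P i), gradE a b (P i)⟫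

/-- planar cross product (determinant) -/
def cross (u v : Pt) : ℝ := u 0 * v 1 - u 1 * v 0

/-- Convex orbit: for each side, all other vertices lie strictly on one
and the same side of the line through P i and P (i+1). -/
def IsConvexOrbit (a b : ℝ) {N : ℕ} (P : ZMod N → Pt) : Prop :=
  IsOrbit a b P ∧
  ∀ i : ZMod N,
    (∀ j, j ≠ i → j ≠ i + 1 → 0 < cross (P (i + 1) - P i) (P j - P i)) ∨
    (∀ j, j ≠ i → j ≠ i + 1 → cross (P (i + 1) - P i) (P j - P i) < 0)

/-! Both reflection at the ellipse and travel along a chord of it reverse the sign of the component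
of the direction along the gradient: the first by the reflection law, the second because `f` is
quadratic, so `⟪q - p, ∇f q + ∇f p⟫ = 2 (f q - f p)` vanishes for a chord `pq`. Hence the
Joachimsthal quantity is unchanged from one bounce to the next. -/

theorem inner_reflect_eq_neg {E : Type*} [NormedAddCommGroup E] [InnerProductSpace ℝ E]
    (u g : E) :
    ⟪u - (2 * ⟪u, ‖g‖⁻¹ • g⟫) • (‖g‖⁻¹ • g), g⟫ = -⟪u, g⟫ := by
  rcases eq_or_ne g 0 with rfl | hg
  · simp
  have hg_norm : ‖g‖ ≠ 0 := norm_ne_zero_iff.mpr hg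
  rw [inner_sub_left, inner_smul_left, inner_smul_left, inner_smul_right,
    real_inner_self_eq_norm_sq]
  simp only [conj_trivial]
  field_simp
  ring

theorem inner_sub_gradE_add_gradE (a b : ℝ) (p q : Pt) :
    ⟪q - p, gradE a b q + gradE a b p⟫ = 2 * (fE a b q - fE a b p) := by
  simp only [fE, gradE, PiLp.inner_apply, RCLike.inner_apply, conj_trivial, Fin.sum_univ_two,
    PiLp.sub_apply, PiLp.add_apply, WithLp.equiv_symm_apply, Matrix.cons_val_zero,
    Matrix.cons_val_one]
  ring

theorem inner_uvec_gradE_eq_neg {a b : ℝ} {p q : Pt} (h : fE a b p = fE a b q) :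
    ⟪uvec p q, gradE a b q⟫ = -⟪uvec p q, gradE a b p⟫ := by
  have hchord := inner_sub_gradE_add_gradE a b p q
  rw [h, sub_self, mul_zero, inner_add_right] at hchord
  rw [uvec, real_inner_smul_left, real_inner_smul_left, eq_neg_of_add_eq_zero_left hchord,
    mul_neg]

theorem ZMod.eq_of_forall_apply_add_one_eq {N : ℕ} {α : Type*} {φ : ZMod N → α}
    (h : ∀ i, φ (i + 1) = φ i) (i j : ZMod N) : φ i = φ j := by
  have hshift : ∀ (k : ℤ) (i : ZMod N), φ (i + k) = φ i := by
    intro k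
    induction k using Int.induction_on with
    | zero => simp
    | succ k ih => intro i; rw [Int.cast_add, Int.cast_one, ← add_assoc, h, ih]
    | pred k ih =>
      intro i
      rw [← h, ← ih i]
      congr 1
      push_cast
      ring
  obtain ⟨k, hk⟩ := ZMod.intCast_surjective (j - i)
  rw [← hshift k i, hk, add_sub_cancel]

theorem joach_add_one {a b : ℝ} {N : ℕ} {P : ZMod N → Pt} (hP : IsOrbit a b P) (i : ZMod N) :
    joach a b P (i + 1) = joach a b P i := by
  obtain ⟨hon, -, hreflect⟩ := hP
  rw [joach, joach, add_sub_cancel_right,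
    inner_uvec_gradE_eq_neg ((hon i).trans (hon (i + 1)).symm), hreflect i,
    inner_reflect_eq_neg]
  ring

theorem joachimsthal_invariant_general (a b : ℝ)
    (N : ℕ) (P : ZMod N → Pt) (hP : IsOrbit a b P) :
    ∀ i j : ZMod N, joach a b P i = joach a b P j :=
  ZMod.eq_of_forall_apply_add_one_eq (joach_add_one hP)

/-- the Joachimsthal quantity is invariant along any N-periodic orbit. -/
theorem joachimsthal_invariant (a b : ℝ) (hb : 0 < b) (hab : b ≤ a)
    (N : ℕ) (hN : 3 ≤ N) (P : ZMod N → Pt) (hP : IsOrbit a b P) :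
    ∀ i j : ZMod N, joach a b P i = joach a b P j :=
  joachimsthal_invariant_general a b N P hP
end
end

section
/- Let A, B, C be the vertices of a 3-periodic billiard orbit of E, with side lengths ℓ_A, ℓ_B, ℓ_C and semiperimeter s = (ℓ_A + ℓ_B + ℓ_C)/2. Suppose 0 < λ < b² and the confocal ellipse C_λ = {(x,y) : x²/(a²−λ) + y²/(b²−λ) = 1} is tangent to each of the three side lines of the triangle ABC (meets each side line in exactly one point). Then the three extouch points e_A = B + ((s − ℓ_C)/ℓ_A)·(C − B), e_B = C + ((s − ℓ_A)/ℓ_B)·(A − C), e_C = A + ((s − ℓ_B)/ℓ_C)·(B − A) all lie on C_λ (the caustic). -/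
open scoped RealInnerProductSpace

noncomputable section

/-- side length ℓ_A = ‖B − C‖ -/
def lA (P : ZMod 3 → Pt) : ℝ := ‖P 1 - P 2‖
/-- side length ℓ_B = ‖C − A‖ -/
def lB (P : ZMod 3 → Pt) : ℝ := ‖P 2 - P 0‖
/-- side length ℓ_C = ‖A − B‖ -/
def lC (P : ZMod 3 → Pt) : ℝ := ‖P 0 - P 1‖
/-- semiperimeter -/
def sper (P : ZMod 3 → Pt) : ℝ := (lA P + lB P + lC P) / 2
/-- area Δ = |det(B − A, C − A)|/2 -/
def areaT (P : ZMod 3 → Pt) : ℝ := |cross (P 1 - P 0) (P 2 - P 0)| / 2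
/-- inradius r = Δ/s -/
def inradius (P : ZMod 3 → Pt) : ℝ := areaT P / sper P
/-- circumradius R = ℓ_A ℓ_B ℓ_C/(4Δ) -/
def circumradius (P : ZMod 3 → Pt) : ℝ := lA P * lB P * lC P / (4 * areaT P)
/-- incenter I = (ℓ_A·A + ℓ_B·B + ℓ_C·C)/(2s) -/
def incenterT (P : ZMod 3 → Pt) : Pt :=
  (2 * sper P)⁻¹ • (lA P • P 0 + lB P • P 1 + lC P • P 2)

/-- membership in the confocal caustic C_λ = {(x,y) : x²/(a²−λ) + y²/(b²−λ) = 1} -/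
def causticMem (a b lam : ℝ) (p : Pt) : Prop :=
  (p 0) ^ 2 / (a ^ 2 - lam) + (p 1) ^ 2 / (b ^ 2 - lam) = 1

/-- the line through two points -/
def lineThrough (p q : Pt) : Set Pt := {z | ∃ t : ℝ, z = p + t • (q - p)}

/-!
The affine map `(x, y) ↦ (x / √(a² - λ), y / √(b² - λ))` sends `C_λ` to a circle, so in the metric
of `Q(x, y) = (b² - λ) x² + (a² - λ) y²` a triangle inscribed in `E` with sides tangent to `C_λ` is
circumscribed about a circle: the two tangent segments from a vertex `p` have the same `Q`-length
`g p`, each side `pq` has `Q`-length `g p + g q`, and it touches `C_λ` at the point dividing it in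
the ratio `g p : g q`.

By Lagrange's identity, tangency of `pq` also gives `cross p q ² = (g p + g q)²`, and together with
`p, q ∈ E` it turns the form `E(p, q) = b² p₀ q₀ + a² p₁ q₁` into `a²b² - ab√λ ‖p - q‖`. Pairing
Cramer's identity `[q, r] p + [r, p] q + [p, q] r = 0` with `p - q`, first under `Q` and then under
`E`, shows that the cross products `[q, r], [r, p], [p, q]` are the `Q`-lengths of the sides up to
one common sign, and then that `(‖q - r‖ - ‖r - p‖) / ‖p - q‖ = (g p - g q) / (g p + g q)`: the
touching point of `pq` is the extouch point.
-/

def diagForm (α β : ℝ) (u v : Pt) : ℝ := α * u 0 * v 0 + β * u 1 * v 1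

section DiagForm

variable {α β : ℝ} {p q : Pt}

lemma diagForm_add_smul (p w : Pt) (t : ℝ) :
    diagForm α β (p + t • w) (p + t • w) =
      diagForm α β w w * t ^ 2 + 2 * diagForm α β p w * t + diagForm α β p p := by
  simp only [diagForm, PiLp.add_apply, PiLp.smul_apply, smul_eq_mul]; ring

lemma diagForm_add_smul_sub_of_eq {c : ℝ} (hp : diagForm α β p p = c)
    (hq : diagForm α β q q = c) (t : ℝ) :
    diagForm α β (p + t • (q - p)) (p + t • (q - p)) =
      c + t * (t - 1) * diagForm α β (q - p) (q - p) := by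
  have hq' : diagForm α β (p + (1 : ℝ) • (q - p)) (p + (1 : ℝ) • (q - p)) = c := by
    simpa using hq
  rw [diagForm_add_smul] at hq' ⊢
  linear_combination t * hq' + (1 - t) * hp

lemma diagForm_self_pos (hα : 0 < α) (hβ : 0 < β) {u : Pt} (hu : u ≠ 0) :
    0 < diagForm α β u u := by
  have hcoord : u 0 ≠ 0 ∨ u 1 ≠ 0 := by
    by_contra! h
    exact hu (by ext i; fin_cases i <;> simp [h.1, h.2])
  unfold diagForm
  rcases hcoord with h | h
  · nlinarith [mul_pos hα (mul_self_pos.2 h), mul_nonneg hβ.le (mul_self_nonneg (u 1))]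
  · nlinarith [mul_pos hβ (mul_self_pos.2 h), mul_nonneg hα.le (mul_self_nonneg (u 0))]

lemma diagForm_sub_sub (α β lam : ℝ) (u : Pt) :
    diagForm (α - lam) (β - lam) u u = diagForm α β u u - lam * ‖u‖ ^ 2 := by
  simp only [diagForm, EuclideanSpace.real_norm_sq_eq, Fin.sum_univ_two]; ring

lemma diagForm_mul_diagForm_sub_sq (u v : Pt) :
    diagForm α β u u * diagForm α β v v - diagForm α β u v ^ 2 = α * β * cross u v ^ 2 := by
  unfold diagForm cross; ring

lemma cross_sq_of_diagForm {gp gq : ℝ} (hαβ : α * β ≠ 0)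
    (hp : diagForm α β p p = α * β + gp ^ 2) (hq : diagForm α β q q = α * β + gq ^ 2)
    (hpq : diagForm α β (q - p) (q - p) = (gp + gq) ^ 2) :
    cross p q ^ 2 = (gp + gq) ^ 2 := by
  have hmix : diagForm α β p q = α * β - gp * gq := by
    unfold diagForm at *
    simp only [PiLp.sub_apply] at hpq
    linear_combination (hp + hq - hpq) / 2
  apply mul_left_cancel₀ hαβ
  rw [← diagForm_mul_diagForm_sub_sq, hp, hq, hmix]; ring

lemma diagForm_eq_of_cross_sq {lam : ℝ} (hlam : 0 ≤ lam) (hp : diagForm α β p p = α * β)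
    (hq : diagForm α β q q = α * β)
    (h : cross p q ^ 2 = diagForm (α - lam) (β - lam) (q - p) (q - p)) :
    diagForm α β p q = α * β - √(α * β * lam) * ‖p - q‖ := by
  rw [diagForm_sub_sub, norm_sub_rev] at h
  have hpol : 2 * (α * β - diagForm α β p q) = cross p q ^ 2 + lam * ‖p - q‖ ^ 2 := by
    unfold diagForm at *
    simp only [PiLp.sub_apply] at h
    linear_combination -h - hp - hq
  have hsq : (α * β - diagForm α β p q) ^ 2 = α * β * lam * ‖p - q‖ ^ 2 := by
    have hlagrange := diagForm_mul_diagForm_sub_sq (α := α) (β := β) p q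
    rw [hp, hq] at hlagrange
    linear_combination -hlagrange + α * β * hpol
  have hnonneg : 0 ≤ α * β - diagForm α β p q := by
    nlinarith [sq_nonneg (cross p q), sq_nonneg ‖p - q‖]
  have hroot : α * β - diagForm α β p q = √(α * β * lam) * ‖p - q‖ := by
    rw [← Real.sqrt_sq hnonneg, hsq, Real.sqrt_mul' _ (sq_nonneg _), Real.sqrt_sq (norm_nonneg _)]
  linarith

end DiagForm

section Cramer

variable {α β : ℝ} {p q r : Pt}

/- Both relations pair Cramer's identity `[q, r] p + [r, p] q + [p, q] r = 0` with `p - q` under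
the form. -/

lemma cross_relation_of_tangentLengths {K gp gq gr : ℝ}
    (hp : diagForm α β p p = K + gp ^ 2) (hq : diagForm α β q q = K + gq ^ 2)
    (hpq : diagForm α β (q - p) (q - p) = (gp + gq) ^ 2)
    (hqr : diagForm α β (r - q) (r - q) = (gq + gr) ^ 2)
    (hrp : diagForm α β (p - r) (p - r) = (gr + gp) ^ 2) :
    cross q r * gp * (gp + gq) - cross r p * gq * (gp + gq) + cross p q * gr * (gq - gp) = 0 := by
  unfold diagForm at *
  simp only [PiLp.sub_apply] at hpq hqr hrp
  linear_combination (norm := (unfold cross; ring)) (-(cross q r) / 2) * (hp - hq + hpq)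
    + (-(cross r p) / 2) * (hp - hq - hpq) + (-(cross p q) / 2) * (hp - hq - hrp + hqr)

lemma cross_relation_of_chordLengths {c k ℓpq ℓqr ℓrp : ℝ}
    (hp : diagForm α β p p = c) (hq : diagForm α β q q = c)
    (hpq : diagForm α β p q = c - k * ℓpq) (hqr : diagForm α β q r = c - k * ℓqr)
    (hrp : diagForm α β r p = c - k * ℓrp) :
    k * ((cross q r - cross r p) * ℓpq + cross p q * (ℓqr - ℓrp)) = 0 := by
  unfold diagForm at *
  linear_combination (norm := (unfold cross; ring)) (-(cross q r)) * (hp - hpq)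
    - cross r p * (hpq - hq) - cross p q * (hrp - hqr)

end Cramer

/- With opposite signs the relation would give `(gp (gq + gr) + gq (gr + gp))² = gr² (gq - gp)²`,
whose left side is the larger. -/
lemma mul_add_eq_of_cross_relation {gp gq gr cA cB cC : ℝ} (hp : 0 < gp) (hq : 0 < gq)
    (hr : 0 < gr) (hA : cA ^ 2 = (gq + gr) ^ 2) (hB : cB ^ 2 = (gr + gp) ^ 2)
    (hC : cC ^ 2 = (gp + gq) ^ 2)
    (hrel : cA * gp * (gp + gq) - cB * gq * (gp + gq) + cC * gr * (gq - gp) = 0) :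
    cA * (gr + gp) = cB * (gq + gr) := by
  have hsq : (cA * (gr + gp)) ^ 2 = (cB * (gq + gr)) ^ 2 := by
    rw [mul_pow, mul_pow, hA, hB]; ring
  refine (sq_eq_sq_iff_eq_or_eq_neg.1 hsq).resolve_right fun hneg ↦ ?_
  have hlin : cA * (gp + gq) * (gp * (gq + gr) + gq * (gr + gp)) =
      -(cC * (gq + gr) * gr * (gq - gp)) := by
    linear_combination (gq + gr) * hrel + gq * (gp + gq) * hneg
  have hsq' := congrArg (· ^ 2) hlin
  simp only [neg_sq, mul_pow, hA, hC] at hsq'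
  have hzero :
      (gq + gr) ^ 2 * (gp + gq) ^ 2 * (4 * (gp * gq + gp * gr) * (gp * gq + gq * gr)) = 0 := by
    linear_combination hsq'
  exact (by positivity : (0 : ℝ) < _).ne' hzero

lemma quadratic_double_root {α β γ τ : ℝ} (hα : α ≠ 0) (hτ : α * τ ^ 2 + 2 * β * τ + γ = 0)
    (huniq : ∀ t, α * t ^ 2 + 2 * β * t + γ = 0 → t = τ) : β = -α * τ ∧ γ = α * τ ^ 2 := by
  have hβ : β = -α * τ := by
    have h := huniq (-2 * β / α - τ) (by field_simp; linear_combination α * hτ)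
    field_simp at h
    linarith
  exact ⟨hβ, by rw [hβ] at hτ; linarith⟩

section Caustic

variable {a b lam : ℝ} {p q r : Pt}

lemma ne_zero_of_lt_sq {x : ℝ} (hlam : 0 < lam) (h : lam < x ^ 2) : x ≠ 0 := by
  rintro rfl; norm_num at h; linarith

lemma causticMem_iff (ha : lam ≠ a ^ 2) (hb : lam ≠ b ^ 2) (p : Pt) :
    causticMem a b lam p ↔
      diagForm (b ^ 2 - lam) (a ^ 2 - lam) p p = (b ^ 2 - lam) * (a ^ 2 - lam) := by
  unfold causticMem diagForm
  rw [div_add_div _ _ (sub_ne_zero.2 ha.symm) (sub_ne_zero.2 hb.symm),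
    div_eq_one_iff_eq (mul_ne_zero (sub_ne_zero.2 ha.symm) (sub_ne_zero.2 hb.symm))]
  constructor <;> intro h <;> linear_combination h

lemma fE_eq_one_iff (ha : a ≠ 0) (hb : b ≠ 0) (p : Pt) :
    fE a b p = 1 ↔ diagForm (b ^ 2) (a ^ 2) p p = b ^ 2 * a ^ 2 := by
  simpa [causticMem, fE] using
    causticMem_iff (lam := 0) (pow_ne_zero 2 ha).symm (pow_ne_zero 2 hb).symm p

lemma diagForm_lt_of_causticMem (hlam : 0 < lam) (ha : lam < a ^ 2) (hb : lam < b ^ 2)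
    (hp : causticMem a b lam p) : diagForm (b ^ 2) (a ^ 2) p p < b ^ 2 * a ^ 2 := by
  rw [causticMem_iff ha.ne hb.ne] at hp
  unfold diagForm at hp ⊢
  have hp0 : p 0 ^ 2 ≤ a ^ 2 - lam := by nlinarith [sq_nonneg (p 1)]
  have hp1 : p 1 ^ 2 ≤ b ^ 2 - lam := by nlinarith [sq_nonneg (p 0)]
  nlinarith

def causticPower (a b lam : ℝ) (p : Pt) : ℝ :=
  diagForm (b ^ 2 - lam) (a ^ 2 - lam) p p - (b ^ 2 - lam) * (a ^ 2 - lam)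

/-- `√((b² - λ)(a² - λ))` times the length of a tangent from the image of `p` to the unit circle,
under the affine map `(x, y) ↦ (x / √(a² - λ), y / √(b² - λ))`. -/
def tangentLength (a b lam : ℝ) (p : Pt) : ℝ := √(causticPower a b lam p)

lemma causticPower_add_smul (p w : Pt) (t : ℝ) :
    causticPower a b lam (p + t • w) =
      diagForm (b ^ 2 - lam) (a ^ 2 - lam) w w * t ^ 2 +
        2 * diagForm (b ^ 2 - lam) (a ^ 2 - lam) p w * t + causticPower a b lam p := by
  unfold causticPower; rw [diagForm_add_smul]; ring

lemma diagForm_self_eq_add_sq (h : 0 < tangentLength a b lam p) :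
    diagForm (b ^ 2 - lam) (a ^ 2 - lam) p p =
      (b ^ 2 - lam) * (a ^ 2 - lam) + tangentLength a b lam p ^ 2 := by
  rw [tangentLength, Real.sq_sqrt (Real.sqrt_pos.1 h).le, causticPower]; ring

def IsTangentChord (a b lam : ℝ) (p q : Pt) : Prop :=
  fE a b p = 1 ∧ fE a b q = 1 ∧ q ≠ p ∧ ∃! z, z ∈ lineThrough p q ∧ causticMem a b lam z

namespace IsTangentChord

theorem exists_tangency (hlam : 0 < lam) (ha : lam < a ^ 2) (hb : lam < b ^ 2)
    (h : IsTangentChord a b lam p q) :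
    ∃ τ, 0 < τ ∧ τ < 1 ∧
      causticPower a b lam p = diagForm (b ^ 2 - lam) (a ^ 2 - lam) (q - p) (q - p) * τ ^ 2 ∧
      causticPower a b lam q =
        diagForm (b ^ 2 - lam) (a ^ 2 - lam) (q - p) (q - p) * (1 - τ) ^ 2 ∧
      causticMem a b lam (p + τ • (q - p)) := by
  obtain ⟨hp, hq, hpq, z, ⟨⟨τ, rfl⟩, hz⟩, huniq⟩ := h
  have hw : q - p ≠ 0 := sub_ne_zero.2 hpq
  have mem_iff (t : ℝ) : causticMem a b lam (p + t • (q - p)) ↔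
      diagForm (b ^ 2 - lam) (a ^ 2 - lam) (q - p) (q - p) * t ^ 2 +
        2 * diagForm (b ^ 2 - lam) (a ^ 2 - lam) p (q - p) * t + causticPower a b lam p = 0 := by
    rw [causticMem_iff ha.ne hb.ne, ← causticPower_add_smul, causticPower, sub_eq_zero]
  obtain ⟨hlin, hconst⟩ := quadratic_double_root
    (diagForm_self_pos (by linarith) (by linarith) hw).ne' ((mem_iff τ).1 hz)
    fun t ht ↦ smul_left_injective ℝ hw (add_left_cancel (huniq _ ⟨⟨t, rfl⟩, (mem_iff t).2 ht⟩))
  have hpow_q := causticPower_add_smul (a := a) (b := b) (lam := lam) p (q - p) 1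
  rw [one_smul, add_sub_cancel, hlin, hconst] at hpow_q
  -- `C_λ` lies inside `E`, so the touching point is interior to the chord.
  have ha0 := ne_zero_of_lt_sq hlam ha
  have hb0 := ne_zero_of_lt_sq hlam hb
  have hchord := diagForm_add_smul_sub_of_eq ((fE_eq_one_iff ha0 hb0 p).1 hp)
    ((fE_eq_one_iff ha0 hb0 q).1 hq) τ
  have hinside := diagForm_lt_of_causticMem hlam ha hb hz
  have hw_pos := diagForm_self_pos (α := b ^ 2) (β := a ^ 2) (by positivity) (by positivity) hw
  have hτ : τ * (τ - 1) < 0 := by nlinarith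
  exact ⟨τ, by nlinarith, by nlinarith, hconst, by rw [hpow_q]; ring, hz⟩

theorem tangentLength_spec (hlam : 0 < lam) (ha : lam < a ^ 2) (hb : lam < b ^ 2)
    (h : IsTangentChord a b lam p q) :
    0 < tangentLength a b lam p ∧ 0 < tangentLength a b lam q ∧
      diagForm (b ^ 2 - lam) (a ^ 2 - lam) (q - p) (q - p) =
        (tangentLength a b lam p + tangentLength a b lam q) ^ 2 ∧
      causticMem a b lam (p + (tangentLength a b lam p /
        (tangentLength a b lam p + tangentLength a b lam q)) • (q - p)) := by
  obtain ⟨τ, hτ0, hτ1, hp, hq, hz⟩ := h.exists_tangency hlam ha hb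
  have hw := diagForm_self_pos (α := b ^ 2 - lam) (β := a ^ 2 - lam) (by linarith) (by linarith)
    (sub_ne_zero.2 h.2.2.1)
  have hgp : tangentLength a b lam p =
      √(diagForm (b ^ 2 - lam) (a ^ 2 - lam) (q - p) (q - p)) * τ := by
    rw [tangentLength, hp, Real.sqrt_mul hw.le, Real.sqrt_sq hτ0.le]
  have hgq : tangentLength a b lam q =
      √(diagForm (b ^ 2 - lam) (a ^ 2 - lam) (q - p) (q - p)) * (1 - τ) := by
    rw [tangentLength, hq, Real.sqrt_mul hw.le, Real.sqrt_sq (by linarith)]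
  have hsum : tangentLength a b lam p + tangentLength a b lam q =
      √(diagForm (b ^ 2 - lam) (a ^ 2 - lam) (q - p) (q - p)) := by
    rw [hgp, hgq]; ring
  have hroot := Real.sqrt_pos.2 hw
  refine ⟨by rw [hgp]; positivity, by rw [hgq]; exact mul_pos hroot (by linarith), ?_, ?_⟩
  · rw [hsum, Real.sq_sqrt hw.le]
  · rwa [hsum, hgp, mul_div_cancel_left₀ _ hroot.ne']

theorem cross_sq (hlam : 0 < lam) (ha : lam < a ^ 2) (hb : lam < b ^ 2)
    (h : IsTangentChord a b lam p q) :
    cross p q ^ 2 = (tangentLength a b lam p + tangentLength a b lam q) ^ 2 := by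
  obtain ⟨hgp, hgq, hpq, -⟩ := h.tangentLength_spec hlam ha hb
  exact cross_sq_of_diagForm (mul_pos (by linarith) (by linarith)).ne'
    (diagForm_self_eq_add_sq hgp) (diagForm_self_eq_add_sq hgq) hpq

theorem diagForm_self_left (hlam : 0 < lam) (ha : lam < a ^ 2) (hb : lam < b ^ 2)
    (h : IsTangentChord a b lam p q) : diagForm (b ^ 2) (a ^ 2) p p = b ^ 2 * a ^ 2 :=
  (fE_eq_one_iff (ne_zero_of_lt_sq hlam ha) (ne_zero_of_lt_sq hlam hb) p).1 h.1

theorem diagForm_eq (hlam : 0 < lam) (ha : lam < a ^ 2) (hb : lam < b ^ 2)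
    (h : IsTangentChord a b lam p q) :
    diagForm (b ^ 2) (a ^ 2) p q = b ^ 2 * a ^ 2 - √(b ^ 2 * a ^ 2 * lam) * ‖p - q‖ := by
  refine diagForm_eq_of_cross_sq hlam.le (h.diagForm_self_left hlam ha hb)
    ((fE_eq_one_iff (ne_zero_of_lt_sq hlam ha) (ne_zero_of_lt_sq hlam hb) q).1 h.2.1) ?_
  rw [h.cross_sq hlam ha hb, (h.tangentLength_spec hlam ha hb).2.2.1]

theorem tangentLength_div_eq (hlam : 0 < lam) (ha : lam < a ^ 2) (hb : lam < b ^ 2)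
    (hpq : IsTangentChord a b lam p q) (hqr : IsTangentChord a b lam q r)
    (hrp : IsTangentChord a b lam r p) {s : ℝ} (hs : 2 * s = ‖q - r‖ + ‖r - p‖ + ‖p - q‖) :
    tangentLength a b lam p / (tangentLength a b lam p + tangentLength a b lam q) =
      (s - ‖r - p‖) / ‖p - q‖ := by
  obtain ⟨hgp, hgq, hQpq, -⟩ := hpq.tangentLength_spec hlam ha hb
  obtain ⟨-, hgr, hQqr, -⟩ := hqr.tangentLength_spec hlam ha hb
  obtain ⟨-, -, hQrp, -⟩ := hrp.tangentLength_spec hlam ha hb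
  have hQp := diagForm_self_eq_add_sq hgp
  have hQq := diagForm_self_eq_add_sq hgq
  have hQr := diagForm_self_eq_add_sq hgr
  have hcA := hqr.cross_sq hlam ha hb
  have hcB := hrp.cross_sq hlam ha hb
  have hcC := hpq.cross_sq hlam ha hb
  have hAB := mul_add_eq_of_cross_relation hgp hgq hgr hcA hcB hcC
    (cross_relation_of_tangentLengths hQp hQq hQpq hQqr hQrp)
  have hBC := mul_add_eq_of_cross_relation hgq hgr hgp hcB hcC hcA
    (cross_relation_of_tangentLengths hQq hQr hQqr hQrp hQpq)
  have hE := cross_relation_of_chordLengths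
    (hpq.diagForm_self_left hlam ha hb) (hqr.diagForm_self_left hlam ha hb)
    (hpq.diagForm_eq hlam ha hb) (hqr.diagForm_eq hlam ha hb) (hrp.diagForm_eq hlam ha hb)
  have hk : 0 < √(b ^ 2 * a ^ 2 * lam) :=
    Real.sqrt_pos.2 (mul_pos (mul_pos (by linarith) (by linarith)) hlam)
  have hcB0 : cross r p ≠ 0 := fun h0 ↦ by rw [h0] at hcB; nlinarith
  have hratio : (tangentLength a b lam q - tangentLength a b lam p) * ‖p - q‖ +
      (tangentLength a b lam p + tangentLength a b lam q) * (‖q - r‖ - ‖r - p‖) = 0 := by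
    refine (mul_eq_zero.1 ((mul_eq_zero.1 ?_).resolve_left hk.ne')).resolve_left hcB0
    linear_combination (tangentLength a b lam r + tangentLength a b lam p) * hE
      - √(b ^ 2 * a ^ 2 * lam) * ‖p - q‖ * hAB
      + √(b ^ 2 * a ^ 2 * lam) * (‖q - r‖ - ‖r - p‖) * hBC
  have hlC : ‖p - q‖ ≠ 0 := norm_ne_zero_iff.2 (sub_ne_zero.2 hpq.2.2.1.symm)
  rw [div_eq_div_iff (by positivity) hlC]
  linear_combination -hratio / 2 - (tangentLength a b lam p + tangentLength a b lam q) / 2 * hs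

theorem causticMem_extouch (hlam : 0 < lam) (ha : lam < a ^ 2) (hb : lam < b ^ 2)
    (hpq : IsTangentChord a b lam p q) (hqr : IsTangentChord a b lam q r)
    (hrp : IsTangentChord a b lam r p) {s : ℝ} (hs : 2 * s = ‖q - r‖ + ‖r - p‖ + ‖p - q‖) :
    causticMem a b lam (p + ((s - ‖r - p‖) / ‖p - q‖) • (q - p)) := by
  rw [← hpq.tangentLength_div_eq hlam ha hb hqr hrp hs]
  exact (hpq.tangentLength_spec hlam ha hb).2.2.2

end IsTangentChord

end Caustic

/-- the extouch points of a 3-periodic orbit lie on the confocal caustic. -/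
theorem extouch_points_on_caustic (a b : ℝ) (hb : 0 < b) (hab : b ≤ a)
    (P : ZMod 3 → Pt) (hP : IsOrbit a b P) (lam : ℝ) (hlam0 : 0 < lam)
    (hlamb : lam < b ^ 2)
    (htan : ∀ i : ZMod 3,
      ∃! z : Pt, z ∈ lineThrough (P i) (P (i + 1)) ∧ causticMem a b lam z) :
    causticMem a b lam (P 1 + ((sper P - lC P) / lA P) • (P 2 - P 1)) ∧
    causticMem a b lam (P 2 + ((sper P - lA P) / lB P) • (P 0 - P 2)) ∧
    causticMem a b lam (P 0 + ((sper P - lB P) / lC P) • (P 1 - P 0)) := by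
  obtain ⟨hon, hne, -⟩ := hP
  have hla : lam < a ^ 2 := hlamb.trans_le (pow_le_pow_left₀ hb.le hab 2)
  have chord (i : ZMod 3) : IsTangentChord a b lam (P i) (P (i + 1)) :=
    ⟨hon i, hon (i + 1), hne i, htan i⟩
  have hAB : IsTangentChord a b lam (P 0) (P 1) := chord 0
  have hBC : IsTangentChord a b lam (P 1) (P 2) := chord 1
  have hCA : IsTangentChord a b lam (P 2) (P 0) := chord 2
  refine ⟨hBC.causticMem_extouch hlam0 hla hlamb hCA hAB ?_,
    hCA.causticMem_extouch hlam0 hla hlamb hAB hBC ?_,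
    hAB.causticMem_extouch hlam0 hla hlamb hBC hCA ?_⟩ <;>
  · unfold sper lA lB lC; ring
end
end

section
/- For every 3-periodic billiard orbit of E with vertices A, B, C: r/R = γ·L − 4, where r = Δ/s is the inradius, R = ℓ_A ℓ_B ℓ_C/(4Δ) the circumradius, L = ℓ_A + ℓ_B + ℓ_C the perimeter, and γ = (1/2)·(u_{i−1}·∇f(P i)) the Joachimsthal constant of the orbit. -/
/-! In the coordinates `(x/a, y/b)` the vertices become unit vectors `vᵢ`, and the Joachimsthal
relation at a bounce reads `vᵢ₋₁ · vᵢ = 1 - γ ℓ`, where `ℓ` is the side joining the two vertices;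
also `|vᵢ - vᵢ₋₁|² = 2γℓ`, so `γ > 0`. The Gram determinant of three plane vectors vanishes;
substituting these inner products and cancelling `γ²` gives
`2(ℓ_Aℓ_B + ℓ_Bℓ_C + ℓ_Cℓ_A) - ℓ_A² - ℓ_B² - ℓ_C² = 2γ ℓ_Aℓ_Bℓ_C`. The left side times `L` minus
`8ℓ_Aℓ_Bℓ_C` is `8(s - ℓ_A)(s - ℓ_B)(s - ℓ_C)`, and by Heron's formula
`r/R = 4Δ²/(s ℓ_Aℓ_Bℓ_C) = 4(s - ℓ_A)(s - ℓ_B)(s - ℓ_C)/(ℓ_Aℓ_Bℓ_C) = γL - 4`. -/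

open scoped RealInnerProductSpace

noncomputable section

def ellipseForm (a b : ℝ) (p q : Pt) : ℝ := p 0 * q 0 / a ^ 2 + p 1 * q 1 / b ^ 2

section EllipseForm

variable {a b : ℝ}

theorem ellipseForm_self (p : Pt) : ellipseForm a b p p = fE a b p := by
  simp only [ellipseForm, fE]; ring

theorem ellipseForm_sub_left (p q r : Pt) :
    ellipseForm a b (p - q) r = ellipseForm a b p r - ellipseForm a b q r := by
  simp only [ellipseForm, PiLp.sub_apply]; ring

theorem ellipseForm_sub_sub (p q : Pt) :
    ellipseForm a b (q - p) (q - p) = fE a b q - 2 * ellipseForm a b p q + fE a b p := by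
  simp only [ellipseForm, fE, PiLp.sub_apply]; ring

theorem inner_gradE (v q : Pt) : ⟪v, gradE a b q⟫ = 2 * ellipseForm a b v q := by
  simp [gradE, ellipseForm, PiLp.inner_apply, Fin.sum_univ_two]; ring

theorem ellipseForm_self_pos (ha : a ≠ 0) (hb : b ≠ 0) {d : Pt} (hd : d ≠ 0) :
    0 < ellipseForm a b d d := by
  have hcoord : d 0 ≠ 0 ∨ d 1 ≠ 0 := by
    by_contra! h
    exact hd (by ext i; fin_cases i <;> simp [h.1, h.2])
  have hsq {x c : ℝ} (hx : x ≠ 0) (hc : c ≠ 0) : 0 < x ^ 2 / c ^ 2 :=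
    div_pos (pow_two_pos_of_ne_zero hx) (pow_two_pos_of_ne_zero hc)
  rw [ellipseForm_self, fE]
  rcases hcoord with h | h
  · exact add_pos_of_pos_of_nonneg (hsq h ha) (by positivity)
  · exact add_pos_of_nonneg_of_pos (by positivity) (hsq h hb)

/-- Three vectors of the plane are linearly dependent, so their Gram determinant vanishes. -/
theorem ellipseForm_gram_det (p q r : Pt) :
    fE a b p * fE a b q * fE a b r
      + 2 * ellipseForm a b p q * ellipseForm a b q r * ellipseForm a b r p
      - fE a b p * ellipseForm a b q r ^ 2 - fE a b q * ellipseForm a b r p ^ 2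
      - fE a b r * ellipseForm a b p q ^ 2 = 0 := by
  simp only [ellipseForm, fE]; ring

end EllipseForm

namespace IsOrbit

variable {a b : ℝ} {N : ℕ} {P : ZMod N → Pt}

theorem norm_sub_pred_pos (hP : IsOrbit a b P) (i : ZMod N) : 0 < ‖P i - P (i - 1)‖ := by
  have := hP.2.1 (i - 1)
  rw [sub_add_cancel] at this
  exact norm_pos_iff.mpr (sub_ne_zero.mpr this)

theorem ellipseForm_pred (hP : IsOrbit a b P) (i : ZMod N) :
    ellipseForm a b (P (i - 1)) (P i) = 1 - joach a b P i * ‖P i - P (i - 1)‖ := by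
  have hℓ := (hP.norm_sub_pred_pos i).ne'
  rw [joach, uvec, real_inner_smul_left, inner_gradE, ellipseForm_sub_left, ellipseForm_self,
    hP.1 i]
  field_simp
  ring

theorem joach_pos (hP : IsOrbit a b P) (ha : a ≠ 0) (hb : b ≠ 0) (i : ZMod N) :
    0 < joach a b P i := by
  have hform := ellipseForm_self_pos ha hb (sub_ne_zero.mpr (hP.2.1 (i - 1)))
  rw [sub_add_cancel, ellipseForm_sub_sub, hP.ellipseForm_pred, hP.1, hP.1] at hform
  exact pos_of_mul_pos_left (by linarith) (hP.norm_sub_pred_pos i).le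

end IsOrbit

theorem sides_eq_of_gram_det {γ x y z : ℝ} (hγ : γ ≠ 0)
    (h : 1 + 2 * (1 - γ * x) * (1 - γ * y) * (1 - γ * z)
      - (1 - γ * x) ^ 2 - (1 - γ * y) ^ 2 - (1 - γ * z) ^ 2 = 0) :
    2 * (x * y + y * z + z * x) - x ^ 2 - y ^ 2 - z ^ 2 = 2 * γ * (x * y * z) := by
  have : γ ^ 2 * (2 * (x * y + y * z + z * x) - x ^ 2 - y ^ 2 - z ^ 2 - 2 * γ * (x * y * z))
      = 0 := by
    linear_combination h
  linear_combination (mul_eq_zero.mp this).resolve_left (pow_ne_zero 2 hγ)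

theorem areaT_sq (P : ZMod 3 → Pt) :
    16 * areaT P ^ 2 = 2 * (lA P ^ 2 * lB P ^ 2 + lB P ^ 2 * lC P ^ 2 + lC P ^ 2 * lA P ^ 2)
      - lA P ^ 4 - lB P ^ 4 - lC P ^ 4 := by
  have hsq (p q : Pt) : ‖p - q‖ ^ 2 = (p 0 - q 0) ^ 2 + (p 1 - q 1) ^ 2 := by
    simp [EuclideanSpace.real_norm_sq_eq, Fin.sum_univ_two]
  have h4 (p q : Pt) : ‖p - q‖ ^ 4 = (‖p - q‖ ^ 2) ^ 2 := by ring
  simp only [areaT, lA, lB, lC, div_pow, sq_abs, h4, hsq, cross, PiLp.sub_apply]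
  ring

theorem inradius_div_circumradius (P : ZMod 3 → Pt) :
    inradius P / circumradius P = 4 * areaT P ^ 2 / (sper P * (lA P * lB P * lC P)) := by
  rw [inradius, circumradius, div_div_div_eq]
  ring

/-- r/R = γ·L − 4 for every 3-periodic orbit. -/
theorem rR_eq_gammaL_sub_four (a b : ℝ) (hb : 0 < b) (hab : b ≤ a)
    (P : ZMod 3 → Pt) (hP : IsOrbit a b P) (γ : ℝ)
    (hγ : ∀ i : ZMod 3, joach a b P i = γ) :
    inradius P / circumradius P = γ * (lA P + lB P + lC P) - 4 := by
  have hγpos : 0 < γ := hγ 0 ▸ hP.joach_pos (hb.trans_le hab).ne' hb.ne' 0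
  have side (i : ZMod 3) : ellipseForm a b (P (i - 1)) (P i) = 1 - γ * ‖P i - P (i - 1)‖ ∧
      0 < ‖P i - P (i - 1)‖ := ⟨hγ i ▸ hP.ellipseForm_pred i, hP.norm_sub_pred_pos i⟩
  obtain ⟨hC, hCpos⟩ : ellipseForm a b (P 0) (P 1) = 1 - γ * lC P ∧ 0 < lC P := by
    simpa only [lC, norm_sub_rev (P 0), sub_self] using side 1
  obtain ⟨hA, hApos⟩ : ellipseForm a b (P 1) (P 2) = 1 - γ * lA P ∧ 0 < lA P := by
    simpa only [lA, norm_sub_rev (P 1), show (2 : ZMod 3) - 1 = 1 from rfl] using side 2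
  obtain ⟨hB, hBpos⟩ : ellipseForm a b (P 2) (P 0) = 1 - γ * lB P ∧ 0 < lB P := by
    simpa only [lB, norm_sub_rev (P 2), show (0 : ZMod 3) - 1 = 2 from rfl] using side 0
  have hgram := ellipseForm_gram_det (a := a) (b := b) (P 0) (P 1) (P 2)
  rw [hP.1, hP.1, hP.1, hA, hB, hC] at hgram
  have hsides := sides_eq_of_gram_det (x := lA P) (y := lB P) (z := lC P) hγpos.ne'
    (by linear_combination hgram)
  have hpos : 0 < sper P * (lA P * lB P * lC P) := by unfold sper; positivity
  rw [inradius_div_circumradius, div_eq_iff hpos.ne']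
  unfold sper
  linear_combination areaT_sq P / 4 + (lA P + lB P + lC P) ^ 2 / 4 * hsides
end
end

section
/- For every convex N-periodic billiard orbit P of the ellipse E (N ≥ 3), with Joachimsthal constant γ and perimeter L = ∑_i ‖P(i+1) − P(i)‖, the sum of the cosines of the interior angles satisfies ∑_{i ∈ ZMod N} cos θ_i = γ·L − N, where cos θ_i = ((P(i−1) − P(i))/‖P(i−1) − P(i)‖)·((P(i+1) − P(i))/‖P(i+1) − P(i)‖). -/
/-! At a bounce the incoming and outgoing unit directions differ by a multiple `c • ∇f(Pᵢ)`.
Pairing this with the incoming direction and with `Pᵢ` (Euler: `⟪∇f(p), p⟫ = 2 f(p) = 2`) gives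
`cos θᵢ = 2cγ - 1 = γ ⟪u_{i-1} - u_i, Pᵢ⟫ - 1`, and the sum of `⟪u_{i-1} - u_i, Pᵢ⟫` over the
orbit telescopes, after an index shift, to `∑ ⟪u_i, P_{i+1} - P_i⟫ = L`. -/

open scoped RealInnerProductSpace

noncomputable section

theorem inner_gradE_self (a b : ℝ) (p : Pt) : ⟪gradE a b p, p⟫ = 2 * fE a b p := by
  simp only [gradE, fE, PiLp.inner_apply, RCLike.inner_apply, conj_trivial, Fin.sum_univ_two,
    WithLp.equiv_symm_apply, Matrix.cons_val_zero, Matrix.cons_val_one]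
  ring

theorem norm_uvec {p q : Pt} (h : p ≠ q) : ‖uvec p q‖ = 1 := by
  rw [uvec, norm_smul, norm_inv, norm_norm,
    inv_mul_cancel₀ (norm_ne_zero_iff.mpr (sub_ne_zero.mpr h.symm))]

theorem uvec_swap (p q : Pt) : uvec q p = -uvec p q := by
  rw [uvec, uvec, norm_sub_rev, ← smul_neg, neg_sub]

theorem inner_uvec_sub (p q : Pt) : ⟪uvec p q, q - p⟫ = ‖q - p‖ := by
  rcases eq_or_ne (q - p) 0 with h | h
  · simp [h]
  · rw [uvec, real_inner_smul_left, real_inner_self_eq_norm_sq, pow_two,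
      inv_mul_cancel_left₀ (norm_ne_zero_iff.mpr h)]

theorem neg_inner_eq_of_sub_eq_smul {E : Type*} [NormedAddCommGroup E] [InnerProductSpace ℝ E]
    {v w g p : E} {c γ : ℝ} (hv : ‖v‖ = 1) (hvw : v - w = c • g) (hvg : ⟪v, g⟫ = 2 * γ)
    (hgp : ⟪g, p⟫ = 2) : -⟪v, w⟫ = γ * ⟪v - w, p⟫ - 1 := by
  have hvv : ⟪v, v - w⟫ = 1 - ⟪v, w⟫ := by
    rw [inner_sub_right, real_inner_self_eq_norm_sq, hv, one_pow]
  rw [hvw, real_inner_smul_right, hvg] at hvv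
  rw [hvw, real_inner_smul_left, hgp]
  linarith

theorem IsOrbit.inner_uvec_uvec_eq {a b : ℝ} {N : ℕ} {P : ZMod N → Pt} (hP : IsOrbit a b P)
    {γ : ℝ} (i : ZMod N) (hγ : joach a b P i = γ) :
    ⟪uvec (P i) (P (i - 1)), uvec (P i) (P (i + 1))⟫ =
      γ * ⟪uvec (P (i - 1)) (P i) - uvec (P i) (P (i + 1)), P i⟫ - 1 := by
  obtain ⟨hon, hne, hrefl⟩ := hP
  set g := gradE a b (P i)
  have hvw : uvec (P (i - 1)) (P i) - uvec (P i) (P (i + 1)) =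
      (2 * ⟪uvec (P (i - 1)) (P i), ‖g‖⁻¹ • g⟫ * ‖g‖⁻¹) • g := by
    rw [hrefl i, sub_sub_cancel, smul_smul]
  have hv : ‖uvec (P (i - 1)) (P i)‖ = 1 :=
    norm_uvec (by simpa only [sub_add_cancel] using (hne (i - 1)).symm)
  rw [uvec_swap, inner_neg_left]
  refine neg_inner_eq_of_sub_eq_smul hv hvw ?_ (by rw [inner_gradE_self, hon, mul_one])
  rw [← hγ, joach]
  ring

theorem sum_of_cosines_eq_gammaL_sub_N_general (a b : ℝ)
    (N : ℕ) [NeZero N] (P : ZMod N → Pt) (hP : IsConvexOrbit a b P)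
    (γ : ℝ) (hγ : ∀ i : ZMod N, joach a b P i = γ) :
    (∑ i : ZMod N, ⟪uvec (P i) (P (i - 1)), uvec (P i) (P (i + 1))⟫) =
      γ * (∑ i : ZMod N, ‖P (i + 1) - P i‖) - N := by
  have hshift : ∑ i : ZMod N, ⟪uvec (P (i - 1)) (P i), P i⟫ =
      ∑ i : ZMod N, ⟪uvec (P i) (P (i + 1)), P (i + 1)⟫ := by
    refine Fintype.sum_equiv (Equiv.subRight 1) _ _ fun i => ?_
    simp only [Equiv.subRight_apply, sub_add_cancel]
  calc (∑ i : ZMod N, ⟪uvec (P i) (P (i - 1)), uvec (P i) (P (i + 1))⟫)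
      = ∑ i : ZMod N, (γ * ⟪uvec (P (i - 1)) (P i) - uvec (P i) (P (i + 1)), P i⟫ - 1) :=
        Finset.sum_congr rfl fun i _ => hP.1.inner_uvec_uvec_eq i (hγ i)
    _ = γ * ∑ i : ZMod N, ⟪uvec (P i) (P (i + 1)), P (i + 1) - P i⟫ - N := by
        simp only [Finset.sum_sub_distrib, ← Finset.mul_sum, inner_sub_left, inner_sub_right,
          hshift, Finset.sum_const, Finset.card_univ, ZMod.card, nsmul_eq_mul, mul_one]
    _ = γ * (∑ i : ZMod N, ‖P (i + 1) - P i‖) - N := by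
        simp only [inner_uvec_sub]

/-- for a convex N-periodic orbit, ∑ cos θᵢ = γ·L − N. -/
theorem sum_of_cosines_eq_gammaL_sub_N (a b : ℝ) (hb : 0 < b) (hab : b ≤ a)
    (N : ℕ) [NeZero N] (hN : 3 ≤ N) (P : ZMod N → Pt) (hP : IsConvexOrbit a b P)
    (γ : ℝ) (hγ : ∀ i : ZMod N, joach a b P i = γ) :
    (∑ i : ZMod N, ⟪uvec (P i) (P (i - 1)), uvec (P i) (P (i + 1))⟫) =
      γ * (∑ i : ZMod N, ‖P (i + 1) - P i‖) - N :=
  sum_of_cosines_eq_gammaL_sub_N_general a b N P hP γ hγ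
end
end

section
/- Generalized Mittenpunkt: let P be a convex N-periodic billiard orbit of E (N ≥ 3). For each i, if T ∈ ℝ² is the corresponding vertex of the tangential polygon, i.e., T·∇f(P i) = 2 and T·∇f(P(i+1)) = 2, then T, the midpoint M = (P i + P(i+1))/2 of the orbit side, and the origin (the center of the billiard) are collinear; equivalently det(T, M) = T₁·M₂ − T₂·M₁ = 0. Hence the lines from the tangential polygon's vertices through the midpoints of the orbit's sides all concur at the billiard's center. -/
/-!
Write `B(x, y) = x₀y₀/a² + x₁y₁/b²` for the polar form of `f`, so that `⟪x, ∇f y⟫ = 2 B(x, y)`.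
For a side `p q` of the orbit and `n = ∇f(q - p)`, the tangential vertex `T` satisfies
`B(T, q) = B(T, p) = 1`, hence `⟪T, n⟫ = 0`, while the midpoint satisfies
`B(p + q, q - p) = f q - f p = 0`, hence `⟪M, n⟫ = 0`. Since `n ≠ 0`, its orthogonal complement in
the plane is a line through the origin, which therefore contains both `T` and `M`.
-/

open scoped RealInnerProductSpace

lemma cross_eq_zero_of_inner_eq_zero {u v n : Pt} (hn : n ≠ 0) (hu : ⟪u, n⟫ = 0)
    (hv : ⟪v, n⟫ = 0) : cross u v = 0 := by
  simp only [PiLp.inner_apply, RCLike.inner_apply, conj_trivial, Fin.sum_univ_two] at hu hv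
  have h0 : cross u v * n 0 = 0 := by unfold cross; linear_combination v 1 * hu - u 1 * hv
  have h1 : cross u v * n 1 = 0 := by unfold cross; linear_combination u 0 * hv - v 0 * hu
  by_contra hc
  refine hn ?_
  ext j
  fin_cases j
  · exact (mul_eq_zero.mp h0).resolve_left hc
  · exact (mul_eq_zero.mp h1).resolve_left hc

section Ellipse

variable {a b : ℝ}

lemma inner_gradE_s17 (x y : Pt) :
    ⟪x, gradE a b y⟫ = 2 * (x 0 * y 0 / a ^ 2 + x 1 * y 1 / b ^ 2) := by
  simp only [gradE, PiLp.inner_apply, RCLike.inner_apply, conj_trivial, Fin.sum_univ_two,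
    WithLp.equiv_symm_apply, Matrix.cons_val_zero, Matrix.cons_val_one]
  ring

lemma gradE_sub (p q : Pt) : gradE a b (p - q) = gradE a b p - gradE a b q := by
  ext j
  fin_cases j <;>
    simp only [gradE, PiLp.sub_apply, WithLp.equiv_symm_apply, Fin.zero_eta, Fin.mk_one,
      Matrix.cons_val_zero, Matrix.cons_val_one, Matrix.cons_val_fin_one] <;>
    ring

lemma inner_add_gradE_sub (p q : Pt) :
    ⟪p + q, gradE a b (q - p)⟫ = 2 * (fE a b q - fE a b p) := by
  simp only [inner_gradE_s17, fE, PiLp.add_apply, PiLp.sub_apply]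
  ring

lemma gradE_ne_zero (ha : a ≠ 0) (hb : b ≠ 0) {p : Pt} (hp : p ≠ 0) : gradE a b p ≠ 0 := by
  intro h
  refine hp ?_
  ext j
  have h0 := congrArg (· 0) h
  have h1 := congrArg (· 1) h
  simp only [gradE, WithLp.equiv_symm_apply, PiLp.toLp_apply, Matrix.cons_val_zero,
    Matrix.cons_val_one, PiLp.zero_apply] at h0 h1
  fin_cases j
  · simpa [ha] using h0
  · simpa [hb] using h1

end Ellipse

theorem generalized_mittenpunkt_general (a b : ℝ) (hb : 0 < b) (hab : b ≤ a)
    (N : ℕ) (P : ZMod N → Pt) (hP : IsConvexOrbit a b P) :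
    ∀ (i : ZMod N) (T : Pt), ⟪T, gradE a b (P i)⟫ = 2 →
      ⟪T, gradE a b (P (i + 1))⟫ = 2 →
      cross T ((2 : ℝ)⁻¹ • (P i + P (i + 1))) = 0 := by
  intro i T hT hT'
  obtain ⟨hon, hne, -⟩ := hP.1
  have hn : gradE a b (P (i + 1) - P i) ≠ 0 :=
    gradE_ne_zero (hb.trans_le hab).ne' hb.ne' (sub_ne_zero.mpr (hne i))
  refine cross_eq_zero_of_inner_eq_zero hn ?_ ?_
  · rw [gradE_sub, inner_sub_right, hT, hT', sub_self]
  · rw [real_inner_smul_left, inner_add_gradE_sub, hon, hon, sub_self, mul_zero, mul_zero]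

/-- generalized Mittenpunkt — each tangential-polygon vertex, the
midpoint of the corresponding orbit side, and the billiard center are collinear. -/
theorem generalized_mittenpunkt (a b : ℝ) (hb : 0 < b) (hab : b ≤ a)
    (N : ℕ) (hN : 3 ≤ N) (P : ZMod N → Pt) (hP : IsConvexOrbit a b P) :
    ∀ (i : ZMod N) (T : Pt), ⟪T, gradE a b (P i)⟫ = 2 →
      ⟪T, gradE a b (P (i + 1))⟫ = 2 →
      cross T ((2 : ℝ)⁻¹ • (P i + P (i + 1))) = 0 :=
  generalized_mittenpunkt_general a b hb hab N P hP
end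

section
/- Generalized Extouch points: let P be a convex N-periodic billiard orbit of E (N ≥ 3), let 0 < λ < b², and suppose the confocal ellipse C_λ = {(x,y) : x²/(a²−λ) + y²/(b²−λ) = 1} is tangent to each of the orbit's side lines (the caustic). For each i, let T be the tangential polygon vertex (T·∇f(P i) = 2 and T·∇f(P(i+1)) = 2), and let F be the foot of the perpendicular dropped from T onto the side line through P i and P(i+1), i.e., the unique point of that line with (T − F)·(P(i+1) − P i) = 0. Then F lies on C_λ. -/
/-!
Write `D_μ = diag((a² - μ)⁻¹, (b² - μ)⁻¹)`, so that `E` and `C_λ` are the level sets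
`⟪D_μ x, x⟫ = 1` for `μ = 0` and `μ = λ`. The side line through `P i` and `P (i + 1)` is the
polar `{x | ⟪D₀ T, x⟫ = 1}` of `T`; being tangent to `C_λ` at some `z`, it is also
`{x | ⟪D_λ z, x⟫ = 1}`. In the plane a line missing the origin has only one such normal, so
`D₀ T = D_λ z`. As `D_μ⁻¹ = D₀⁻¹ - μ`, this gives `T - z = λ • D_λ z`, which is orthogonal to the
line, so `z` is the foot `F`.
-/

open scoped RealInnerProductSpace

noncomputable section

open Module Submodule

section InnerProductSpace

variable {E : Type*} [NormedAddCommGroup E] [InnerProductSpace ℝ E]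

theorem LinearMap.IsSymmetric.inner_map_add_smul_self {D : E →ₗ[ℝ] E} (hD : D.IsSymmetric)
    (z d : E) (t : ℝ) :
    ⟪D (z + t • d), z + t • d⟫ = ⟪D z, z⟫ + t * (2 * ⟪D z, d⟫ + t * ⟪D d, d⟫) := by
  simp only [map_add, map_smul, inner_add_left, inner_add_right, inner_smul_left,
    inner_smul_right, RCLike.conj_to_real]
  rw [hD d z, real_inner_comm (D z) d]
  ring

theorem LinearMap.IsSymmetric.inner_map_eq_zero_of_line_meets_level_set_once
    {D : E →ₗ[ℝ] E} (hD : D.IsSymmetric) {z d : E} (hd : ⟪D d, d⟫ ≠ 0)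
    (h : ∀ t : ℝ, ⟪D (z + t • d), z + t • d⟫ = ⟪D z, z⟫ → t = 0) : ⟪D z, d⟫ = 0 := by
  -- the second intersection of the line with the level set sits at this parameter
  have hzero := h (-(2 * ⟪D z, d⟫) / ⟪D d, d⟫) (by
    rw [hD.inner_map_add_smul_self]
    field_simp
    ring)
  simpa [hd] using hzero

theorem eq_of_inner_sub_add_smul_eq_zero {T p d : E} (hd : d ≠ 0) {t s : ℝ}
    (ht : ⟪T - (p + t • d), d⟫ = 0) (hs : ⟪T - (p + s • d), d⟫ = 0) : t = s := by
  simp only [inner_sub_left, inner_add_left, inner_smul_left, RCLike.conj_to_real] at ht hs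
  have : (s - t) * ⟪d, d⟫ = 0 := by linear_combination ht - hs
  have hdd : ⟪d, d⟫ ≠ 0 := inner_self_ne_zero.2 hd
  linarith [(mul_eq_zero.1 this).resolve_right hdd]

theorem eq_of_inner_eq_one_of_inner_eq_zero [Fact (finrank ℝ E = 2)] {n m p d : E} (hd : d ≠ 0)
    (hnp : ⟪n, p⟫ = 1) (hmp : ⟪m, p⟫ = 1) (hnd : ⟪n, d⟫ = 0) (hmd : ⟪m, d⟫ = 0) : n = m := by
  by_contra hnm
  have hp : p ∈ ℝ ∙ d :=
    mem_span_singleton_of_inner_eq_zero_of_inner_eq_zero (sub_ne_zero.2 hnm) hd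
      (by rw [inner_sub_left, hnp, hmp, sub_self]) (by rw [inner_sub_left, hnd, hmd, sub_self])
  obtain ⟨c, rfl⟩ := mem_span_singleton.1 hp
  simp [inner_smul_right, hnd] at hnp

end InnerProductSpace

instance : Fact (finrank ℝ Pt = 2) := ⟨finrank_euclideanSpace_fin⟩

def confocalOp (a b μ : ℝ) : Pt →ₗ[ℝ] Pt :=
  Matrix.toEuclideanLin (Matrix.diagonal ![(a ^ 2 - μ)⁻¹, (b ^ 2 - μ)⁻¹])

section Confocal

variable {a b μ : ℝ}

@[simp]
theorem confocalOp_apply_zero (x : Pt) : confocalOp a b μ x 0 = (a ^ 2 - μ)⁻¹ * x 0 := by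
  simp [confocalOp]

@[simp]
theorem confocalOp_apply_one (x : Pt) : confocalOp a b μ x 1 = (b ^ 2 - μ)⁻¹ * x 1 := by
  simp [confocalOp]

theorem confocalOp_isSymmetric : (confocalOp a b μ).IsSymmetric :=
  Matrix.isSymmetric_toEuclideanLin_iff.2 (Matrix.isHermitian_diagonal _)

theorem inner_confocalOp_apply (x y : Pt) :
    ⟪confocalOp a b μ x, y⟫ = x 0 * y 0 / (a ^ 2 - μ) + x 1 * y 1 / (b ^ 2 - μ) := by
  simp only [PiLp.inner_apply, RCLike.inner_apply, Real.ringHom_apply, Fin.sum_univ_two,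
    confocalOp_apply_zero, confocalOp_apply_one]
  ring

theorem inner_confocalOp_self_pos (hα : 0 < a ^ 2 - μ) (hβ : 0 < b ^ 2 - μ) {x : Pt} (hx : x ≠ 0) :
    0 < ⟪confocalOp a b μ x, x⟫ := by
  rw [inner_confocalOp_apply]
  have hx' : x 0 ≠ 0 ∨ x 1 ≠ 0 := by
    by_contra! h
    exact hx (by ext i; fin_cases i <;> simp [h.1, h.2])
  rcases hx' with h | h
  · exact add_pos_of_pos_of_nonneg (div_pos (mul_self_pos.2 h) hα)
      (div_nonneg (mul_self_nonneg _) hβ.le)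
  · exact add_pos_of_nonneg_of_pos (div_nonneg (mul_self_nonneg _) hα.le)
      (div_pos (mul_self_pos.2 h) hβ)

theorem causticMem_iff_inner_confocalOp (x : Pt) :
    causticMem a b μ x ↔ ⟪confocalOp a b μ x, x⟫ = 1 := by
  simp only [causticMem, inner_confocalOp_apply, sq]

theorem gradE_eq_two_smul_confocalOp (p : Pt) : gradE a b p = (2 : ℝ) • confocalOp a b 0 p := by
  ext i
  fin_cases i <;> simp [gradE] <;> ring

theorem inner_gradE_eq_two_iff (T p : Pt) :
    ⟪T, gradE a b p⟫ = 2 ↔ ⟪confocalOp a b 0 T, p⟫ = 1 := by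
  rw [gradE_eq_two_smul_confocalOp, inner_smul_right, confocalOp_isSymmetric]
  constructor <;> intro h <;> linarith

theorem sub_eq_smul_confocalOp_of_confocalOp_eq (ha : a ≠ 0) (hb : b ≠ 0) (hα : a ^ 2 - μ ≠ 0)
    (hβ : b ^ 2 - μ ≠ 0) {T z : Pt} (h : confocalOp a b 0 T = confocalOp a b μ z) :
    T - z = μ • confocalOp a b μ z := by
  have h0 := congrArg (· 0) h
  have h1 := congrArg (· 1) h
  simp only [confocalOp_apply_zero, confocalOp_apply_one, sub_zero] at h0 h1
  ext i
  fin_cases i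
  · simp only [Fin.zero_eta, PiLp.sub_apply, PiLp.smul_apply, confocalOp_apply_zero, smul_eq_mul]
    field_simp at h0 ⊢
    linear_combination h0
  · simp only [Fin.mk_one, PiLp.sub_apply, PiLp.smul_apply, confocalOp_apply_one, smul_eq_mul]
    field_simp at h1 ⊢
    linear_combination h1

theorem exists_tangency_point_on_line {p q : Pt} (hα : 0 < a ^ 2 - μ) (hβ : 0 < b ^ 2 - μ)
    (hpq : p ≠ q) (h : ∃! z, z ∈ lineThrough p q ∧ causticMem a b μ z) :
    ∃ s : ℝ, causticMem a b μ (p + s • (q - p)) ∧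
      ⟪confocalOp a b μ (p + s • (q - p)), q - p⟫ = 0 ∧
      ⟪confocalOp a b μ (p + s • (q - p)), p⟫ = 1 := by
  obtain ⟨z, ⟨⟨s, rfl⟩, hz⟩, huniq⟩ := h
  have hd : q - p ≠ 0 := sub_ne_zero.2 hpq.symm
  have hz' := (causticMem_iff_inner_confocalOp _).1 hz
  have hzd : ⟪confocalOp a b μ (p + s • (q - p)), q - p⟫ = 0 := by
    refine confocalOp_isSymmetric.inner_map_eq_zero_of_line_meets_level_set_once
      (inner_confocalOp_self_pos hα hβ hd).ne' fun t ht => ?_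
    have hmem : p + s • (q - p) + t • (q - p) ∈ lineThrough p q :=
      ⟨s + t, by rw [add_smul, add_assoc]⟩
    have heq := huniq _ ⟨hmem, by rw [causticMem_iff_inner_confocalOp, ht, hz']⟩
    simpa [hd] using heq
  refine ⟨s, hz, hzd, ?_⟩
  rwa [inner_add_right, inner_smul_right, hzd, mul_zero, add_zero] at hz'

end Confocal

theorem generalized_extouch_on_caustic_general (a b : ℝ) (hb : 0 < b) (hab : b ≤ a)
    (N : ℕ) (P : ZMod N → Pt) (hP : IsConvexOrbit a b P)
    (lam : ℝ) (hlamb : lam < b ^ 2)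
    (htan : ∀ i : ZMod N,
      ∃! z : Pt, z ∈ lineThrough (P i) (P (i + 1)) ∧ causticMem a b lam z) :
    ∀ (i : ZMod N) (T F : Pt), ⟪T, gradE a b (P i)⟫ = 2 →
      ⟪T, gradE a b (P (i + 1))⟫ = 2 →
      F ∈ lineThrough (P i) (P (i + 1)) →
      ⟪T - F, P (i + 1) - P i⟫ = 0 →
      causticMem a b lam F := by
  rintro i T F hTp hTq ⟨t, rfl⟩ hperp
  have ha : 0 < a := hb.trans_le hab
  have hα : 0 < a ^ 2 - lam := by nlinarith
  have hβ : 0 < b ^ 2 - lam := by linarith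
  have hpq : P i ≠ P (i + 1) := (hP.1.2.1 i).symm
  have hd : P (i + 1) - P i ≠ 0 := sub_ne_zero.2 hpq.symm
  obtain ⟨s, hzC, hzd, hzp⟩ := exists_tangency_point_on_line hα hβ hpq (htan i)
  set z := P i + s • (P (i + 1) - P i)
  rw [inner_gradE_eq_two_iff] at hTp hTq
  have hnormal : confocalOp a b 0 T = confocalOp a b lam z :=
    eq_of_inner_eq_one_of_inner_eq_zero hd hTp hzp (by rw [inner_sub_right, hTp, hTq, sub_self]) hzd
  have hTz : ⟪T - z, P (i + 1) - P i⟫ = 0 := by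
    rw [sub_eq_smul_confocalOp_of_confocalOp_eq ha.ne' hb.ne' hα.ne' hβ.ne' hnormal,
      inner_smul_left, hzd, mul_zero]
  obtain rfl : t = s := eq_of_inner_sub_add_smul_eq_zero hd hperp hTz
  exact hzC

/-- generalized extouch points — the foot of the perpendicular from a
tangential-polygon vertex onto the corresponding orbit side lies on the caustic. -/
theorem generalized_extouch_on_caustic (a b : ℝ) (hb : 0 < b) (hab : b ≤ a)
    (N : ℕ) (hN : 3 ≤ N) (P : ZMod N → Pt) (hP : IsConvexOrbit a b P)
    (lam : ℝ) (hlam0 : 0 < lam) (hlamb : lam < b ^ 2)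
    (htan : ∀ i : ZMod N,
      ∃! z : Pt, z ∈ lineThrough (P i) (P (i + 1)) ∧ causticMem a b lam z) :
    ∀ (i : ZMod N) (T F : Pt), ⟪T, gradE a b (P i)⟫ = 2 →
      ⟪T, gradE a b (P (i + 1))⟫ = 2 →
      F ∈ lineThrough (P i) (P (i + 1)) →
      ⟪T - F, P (i + 1) - P i⟫ = 0 →
      causticMem a b lam F :=
  generalized_extouch_on_caustic_general a b hb hab N P hP lam hlamb htan
end
end
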